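/- arXiv:2304.08917 — 2 statements merged into one kernel-verified Lean document; each statement's English description precedes it below -/
import Mathlib

section
/- Let (Env, TA, ℓ) be an instance of the non-negative coefficient synthesis problem where TA is acyclic with a single initial location start, and let TA' be the sketch obtained from TA by adding a new initial location begin and a new shared variable check that is never incremented, together with an unguarded non-incrementing rule from begin to start and, for each indeterminate x of TA, a non-incrementing rule from begin to ℓ with guard check > x. Then there exists a non-negative integer assignment μ such that TA[μ] cannot cover ℓ if and only if there exists an integer assignment μ such that TA'[μ] cannot cover ℓ. Moreover, TA' is acyclic. -/
namespace ThresholdAutomata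

/-- A comparison operator of a threshold guard (`≥` and `<` as in the definition
of threshold automata, together with `>` and `≤`, used e.g. in the guard
`check > x` of the construction below). -/
inductive CmpOp : Type
  | ge | lt | gt | le

/-- Interpretation of a comparison operator on `ℤ`. -/
def CmpOp.holds : CmpOp → ℤ → ℤ → Prop
  | .ge, a, b => a ≥ b
  | .lt, a, b => a < b
  | .gt, a, b => a > b
  | .le, a, b => a ≤ b

/-- A coefficient of a (sketch) threshold guard: either a concrete integer
constant or an indeterminate. -/
inductive Coeff (Indet : Type) : Type
  | const (c : ℤ)
  | indet (x : Indet)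

/-- The value of a coefficient under an integer assignment `μ` to the
indeterminates. -/
def Coeff.eval {Indet : Type} (μ : Indet → ℤ) : Coeff Indet → ℤ
  | .const c => c
  | .indet x => μ x

/-- A threshold guard `b·x ⋈ a₀ + Σᵢ aᵢ·pᵢ`, where `x` is a shared variable,
the `pᵢ` are the environment variables and the coefficients may be constants
or indeterminates. -/
structure Guard (Shared EnvVar Indet : Type) where
  b : Coeff Indet
  x : Shared
  op : CmpOp
  a0 : Coeff Indet
  a : EnvVar → Coeff Indet

/-- Satisfaction of a threshold guard by shared-variable values `g` and
environment-variable values `pv`, under an assignment `μ` to the indeterminates. -/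
def Guard.sat {Shared EnvVar Indet : Type} [Fintype EnvVar]
    (gd : Guard Shared EnvVar Indet) (μ : Indet → ℤ) (g : Shared → ℕ)
    (pv : EnvVar → ℕ) : Prop :=
  gd.op.holds (gd.b.eval μ * (g gd.x : ℤ))
    (gd.a0.eval μ + ∑ i, (gd.a i).eval μ * (pv i : ℤ))

/-- A rule `(from, to, φ, u)`: source and target locations, a conjunction of
threshold guards, and an update `u : Γ → {0,1}` of the shared variables
(`upd s = true` iff `s` is incremented). -/
structure Rule (Loc Shared EnvVar Indet : Type) where
  src : Loc
  dst : Loc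
  guards : List (Guard Shared EnvVar Indet)
  upd : Shared → Bool

/-- A sketch threshold automaton: a set of initial locations and a set of rules
(whose guard coefficients may contain indeterminates). -/
structure Sketch (Loc Shared EnvVar Indet : Type) where
  initial : Set Loc
  rules : Set (Rule Loc Shared EnvVar Indet)

/-- An environment: a resilience condition `RC` on the valuations of the
environment variables and a number function `N`. -/
structure Env (EnvVar : Type) where
  RC : Set (EnvVar → ℕ)
  N : (EnvVar → ℕ) → ℕ

/-- A configuration `σ = (κ, g, p)`: number of processes in each location,
values of the shared variables, values of the environment variables. -/
structure Config (Loc Shared EnvVar : Type) where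
  κ : Loc → ℕ
  g : Shared → ℕ
  p : EnvVar → ℕ

/-- `C` is a configuration for the environment `env`: the environment valuation
satisfies the resilience condition and the total number of processes is `N(p)`. -/
def Config.validFor {Loc Shared EnvVar : Type} [Fintype Loc]
    (env : Env EnvVar) (C : Config Loc Shared EnvVar) : Prop :=
  C.p ∈ env.RC ∧ (∑ q, C.κ q) = env.N C.p

/-- An initial configuration: all processes are in initial locations and all
shared variables are `0`. -/
def Config.initialFor {Loc Shared EnvVar Indet : Type} [Fintype Loc]
    (env : Env EnvVar) (TA : Sketch Loc Shared EnvVar Indet)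
    (C : Config Loc Shared EnvVar) : Prop :=
  C.validFor env ∧ (∀ q ∉ TA.initial, C.κ q = 0) ∧ (∀ s, C.g s = 0)

/-- The step relation of `TA[μ]`: some rule whose source location is occupied
and whose guards are satisfied fires, moving one process from its source to its
target and adding its update to the shared variables. -/
def Step {Loc Shared EnvVar Indet : Type} [DecidableEq Loc] [Fintype EnvVar]
    (TA : Sketch Loc Shared EnvVar Indet) (μ : Indet → ℤ)
    (C C' : Config Loc Shared EnvVar) : Prop :=
  ∃ r ∈ TA.rules,
    0 < C.κ r.src ∧ (∀ gd ∈ r.guards, gd.sat μ C.g C.p) ∧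
    C'.p = C.p ∧
    (∀ s, C'.g s = C.g s + (if r.upd s then 1 else 0)) ∧
    C'.κ = if r.src = r.dst then C.κ
      else Function.update (Function.update C.κ r.src (C.κ r.src - 1))
        r.dst (C.κ r.dst + 1)

/-- `TA[μ]` can cover the location `ℓ`: some initial configuration can reach a
configuration with at least one process in `ℓ`. -/
def Covers {Loc Shared EnvVar Indet : Type} [DecidableEq Loc] [Fintype Loc]
    [Fintype EnvVar] (env : Env EnvVar) (TA : Sketch Loc Shared EnvVar Indet)
    (μ : Indet → ℤ) (ℓ : Loc) : Prop :=
  ∃ C C' : Config Loc Shared EnvVar, C.initialFor env TA ∧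
    Relation.ReflTransGen (Step TA μ) C C' ∧ 0 < C'.κ ℓ

/-- The sketch is acyclic: the directed graph on the locations with an edge
`(r.from, r.to)` for each rule `r` has no cycles. -/
def Acyclic {Loc Shared EnvVar Indet : Type}
    (TA : Sketch Loc Shared EnvVar Indet) : Prop :=
  ∀ q : Loc, ¬ Relation.TransGen
    (fun u w => ∃ r ∈ TA.rules, r.src = u ∧ r.dst = w) q q

/-! ### The construction of `TA'` from `TA`

`TA'` has a new initial location `begin` (below: `none : Option Loc`) and a new
shared variable `check` (below: `none : Option Shared`) which is never
incremented by any rule, together with an unguarded non-incrementing rule from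
`begin` to `start` and, for each indeterminate `x`, a non-incrementing rule from
`begin` to `ℓ` with the guard `check > x`. -/

/-- A guard of `TA`, viewed as a guard of `TA'`. -/
def liftGuard {Shared EnvVar Indet : Type} (gd : Guard Shared EnvVar Indet) :
    Guard (Option Shared) EnvVar Indet :=
  ⟨gd.b, some gd.x, gd.op, gd.a0, gd.a⟩

/-- A rule of `TA`, viewed as a rule of `TA'`: it does not increment the new
shared variable `check`. -/
def liftRule {Loc Shared EnvVar Indet : Type}
    (r : Rule Loc Shared EnvVar Indet) :
    Rule (Option Loc) (Option Shared) EnvVar Indet :=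
  ⟨some r.src, some r.dst, r.guards.map liftGuard,
    fun s => s.elim false r.upd⟩

/-- The guard `check > x` for an indeterminate `x`, i.e.
`1·check > x + 0·p₁ + … + 0·p_|Π|`. -/
def checkGuard {Shared EnvVar Indet : Type} (x : Indet) :
    Guard (Option Shared) EnvVar Indet :=
  ⟨.const 1, none, .gt, .indet x, fun _ => .const 0⟩

/-- The sketch `TA'` obtained from `TA` (with single initial location `start`)
and location `ℓ`: its initial location is `begin = none`, and its rules are the
rules of `TA`, the unguarded non-incrementing rule from `begin` to `start`, and,
for each indeterminate `x`, the non-incrementing rule from `begin` to `ℓ`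
guarded by `check > x`. -/
def primeSketch {Loc Shared EnvVar Indet : Type}
    (TA : Sketch Loc Shared EnvVar Indet) (start ℓ : Loc) :
    Sketch (Option Loc) (Option Shared) EnvVar Indet where
  initial := {none}
  rules := { r | (∃ r₀ ∈ TA.rules, r = liftRule r₀) ∨
    r = ⟨none, some start, [], fun _ => false⟩ ∨
    (∃ x : Indet, r = ⟨none, some ℓ, [checkGuard x], fun _ => false⟩) }


section Aux

variable {Loc Shared EnvVar Indet : Type}

lemma checkGuard_sat [Fintype EnvVar] (x : Indet) (μ : Indet → ℤ)
    (g : Option Shared → ℕ) (pv : EnvVar → ℕ) :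
    (checkGuard (Shared := Shared) (EnvVar := EnvVar) x).sat μ g pv ↔
      μ x < (g none : ℤ) := by
  simp [Guard.sat, checkGuard, Coeff.eval, CmpOp.holds]

lemma liftGuard_sat [Fintype EnvVar] (gd : Guard Shared EnvVar Indet)
    (μ : Indet → ℤ) (g : Option Shared → ℕ) (pv : EnvVar → ℕ) :
    (liftGuard gd).sat μ g pv ↔ gd.sat μ (fun s => g (some s)) pv := Iff.rfl

lemma step_preserves [Fintype Loc] [DecidableEq Loc] [Fintype EnvVar]
    {TA : Sketch Loc Shared EnvVar Indet} {μ : Indet → ℤ}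
    {C C' : Config Loc Shared EnvVar} (h : Step TA μ C C') :
    C'.p = C.p ∧ ∑ q, C'.κ q = ∑ q, C.κ q := by
  obtain ⟨r, -, hsrc, -, hp, -, hκ⟩ := h
  refine ⟨hp, ?_⟩
  by_cases hsd : r.src = r.dst
  · rw [hκ, if_pos hsd]
  · rw [hκ, if_neg hsd]
    have hd : r.dst ∈ (Finset.univ : Finset Loc) := Finset.mem_univ _
    have hs : r.src ∈ Finset.univ \ {r.dst} := by
      simp [Finset.mem_sdiff, hsd]
    rw [Finset.sum_update_of_mem hd, Finset.sum_update_of_mem hs]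
    have h1 : ∑ q, C.κ q = C.κ r.dst + ∑ q ∈ Finset.univ \ {r.dst}, C.κ q :=
      Finset.sum_eq_add_sum_sdiff_singleton_of_mem hd _
    have h2 : ∑ q ∈ Finset.univ \ {r.dst}, C.κ q
        = C.κ r.src + ∑ q ∈ (Finset.univ \ {r.dst}) \ {r.src}, C.κ q :=
      Finset.sum_eq_add_sum_sdiff_singleton_of_mem hs _
    omega

/-- The projection of a configuration of `TA'` to a configuration of `TA`:
processes in `begin` are counted as being in `start`. -/
def projCfg [DecidableEq Loc] (start : Loc)
    (C : Config (Option Loc) (Option Shared) EnvVar) :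
    Config Loc Shared EnvVar :=
  ⟨fun q => C.κ (some q) + (if q = start then C.κ none else 0),
   fun s => C.g (some s), C.p⟩

/-- The embedding of a configuration of `TA` into configurations of `TA'`. -/
def embCfg (C : Config Loc Shared EnvVar) :
    Config (Option Loc) (Option Shared) EnvVar :=
  ⟨fun o => o.elim 0 C.κ, fun o => o.elim 0 C.g, C.p⟩

lemma step_g_none [Fintype Loc] [DecidableEq Loc] [Fintype EnvVar]
    {TA : Sketch Loc Shared EnvVar Indet} {start ℓ : Loc} {μ : Indet → ℤ}
    {C C' : Config (Option Loc) (Option Shared) EnvVar}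
    (h : Step (primeSketch TA start ℓ) μ C C') : C'.g none = C.g none := by
  obtain ⟨r, hr, -, -, -, hg, -⟩ := h
  have := hg none
  obtain (⟨r₀, hr₀, rfl⟩ | rfl | ⟨x, rfl⟩) := hr <;> simpa [liftRule] using this

lemma proj_step [Fintype Loc] [DecidableEq Loc] [Fintype EnvVar]
    {TA : Sketch Loc Shared EnvVar Indet} {start ℓ : Loc} {μ : Indet → ℤ}
    (hμ : ∀ x, 0 ≤ μ x)
    {C C' : Config (Option Loc) (Option Shared) EnvVar}
    (hg0 : C.g none = 0)
    (h : Step (primeSketch TA start ℓ) μ C C') :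
    Step TA μ (projCfg start C) (projCfg start C') ∨
      projCfg start C' = projCfg start C := by
  obtain ⟨r, hr, hsrc, hgd, hp, hg, hκ⟩ := h
  obtain (⟨r₀, hr₀, rfl⟩ | rfl | ⟨x, rfl⟩) := hr
  · -- a lifted rule of `TA`
    left
    refine ⟨r₀, hr₀, ?_, ?_, hp, ?_, ?_⟩
    · simp only [projCfg, liftRule] at hsrc ⊢
      omega
    · intro gd hgd'
      have := hgd (liftGuard gd) (by simpa [liftRule] using List.mem_map_of_mem (f := liftGuard) hgd')
      exact (liftGuard_sat gd μ C.g C.p).mp this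
    · intro s
      have := hg (some s)
      exact this
    · simp only [liftRule] at hsrc hκ
      by_cases hsd : r₀.src = r₀.dst
      · rw [if_pos hsd]
        simp only [hsd, eq_self_iff_true, if_true] at hκ
        funext q; simp [projCfg, hκ]
      · rw [if_neg hsd]
        simp only [Option.some.injEq, hsd, if_false] at hκ
        funext q
        show C'.κ (some q) + _ = _
        rw [hκ]
        simp only [projCfg, Function.update_apply, Option.some.injEq,
          reduceCtorEq, if_false]
        by_cases hqd : q = r₀.dst <;> by_cases hqs : q = r₀.src <;>
          by_cases hqt : q = start <;>
          simp only [hqd, hqs, hqt, if_true, if_false] <;> subst_vars <;>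
          simp_all <;> omega
  · -- the rule from `begin` to `start`
    right
    simp only at hsrc hκ hg
    rw [if_neg (by simp)] at hκ
    simp only [projCfg, Config.mk.injEq]
    refine ⟨funext fun q => ?_, funext fun s => ?_, hp⟩
    · rw [hκ]
      simp only [Function.update_apply, Option.some.injEq, reduceCtorEq,
        if_false]
      by_cases hqt : q = start <;> simp [hqt] <;> omega
    · simpa using hg (some s)
  · -- the rule guarded by `check > x` cannot fire
    exfalso
    have := hgd (checkGuard x) (by simp)
    rw [checkGuard_sat, hg0] at this
    exact absurd this (by simpa using hμ x)

lemma proj_run [Fintype Loc] [DecidableEq Loc] [Fintype EnvVar]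
    {TA : Sketch Loc Shared EnvVar Indet} {start ℓ : Loc} {μ : Indet → ℤ}
    (hμ : ∀ x, 0 ≤ μ x)
    {C D : Config (Option Loc) (Option Shared) EnvVar}
    (hg0 : C.g none = 0)
    (h : Relation.ReflTransGen (Step (primeSketch TA start ℓ) μ) C D) :
    D.g none = 0 ∧
      Relation.ReflTransGen (Step TA μ) (projCfg start C) (projCfg start D) := by
  induction h with
  | refl => exact ⟨hg0, .refl⟩
  | tail h e ih =>
    obtain ⟨hg, hr⟩ := ih
    refine ⟨(step_g_none e).trans hg, ?_⟩
    rcases proj_step hμ hg e with h' | h'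
    · exact hr.tail h'
    · exact h' ▸ hr

lemma covers_of_prime [Fintype Loc] [DecidableEq Loc] [Fintype EnvVar]
    {env : Env EnvVar} {TA : Sketch Loc Shared EnvVar Indet} {start ℓ : Loc}
    {μ : Indet → ℤ} (hμ : ∀ x, 0 ≤ μ x) (hinit : TA.initial = {start})
    (h : Covers env (primeSketch TA start ℓ) μ (some ℓ)) :
    Covers env TA μ ℓ := by
  obtain ⟨C, D, ⟨⟨hRC, hsum⟩, hloc, hgz⟩, hrun, hpos⟩ := h
  obtain ⟨hgD, hrun'⟩ := proj_run hμ (hgz none) hrun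
  refine ⟨projCfg start C, projCfg start D,
    ⟨⟨hRC, ?_⟩, ?_, fun s => hgz (some s)⟩, hrun', ?_⟩
  · show ∑ q : Loc, (C.κ (some q) + if q = start then C.κ none else 0)
      = env.N C.p
    rw [Finset.sum_add_distrib,
      Finset.sum_ite_eq' Finset.univ start (fun _ => C.κ none)]
    rw [← hsum, Fintype.sum_option]
    simp [add_comm]
  · intro q hq
    have hne : q ≠ start := by rw [hinit] at hq; simpa using hq
    have h1 : C.κ (some q) = 0 := hloc (some q) (by simp [primeSketch])
    simp [projCfg, h1, hne]
  · show 0 < D.κ (some ℓ) + _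
    omega

lemma emb_step [Fintype Loc] [DecidableEq Loc] [Fintype EnvVar]
    {TA : Sketch Loc Shared EnvVar Indet} {start ℓ : Loc} {μ : Indet → ℤ}
    {C C' : Config Loc Shared EnvVar} (h : Step TA μ C C') :
    Step (primeSketch TA start ℓ) μ (embCfg C) (embCfg C') := by
  obtain ⟨r, hr, hsrc, hgd, hp, hg, hκ⟩ := h
  refine ⟨liftRule r, Or.inl ⟨r, hr, rfl⟩, ?_, ?_, hp, ?_, ?_⟩
  · simpa [embCfg, liftRule] using hsrc
  · intro gd hgd'
    simp only [liftRule, List.mem_map] at hgd'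
    obtain ⟨gd₀, hmem, rfl⟩ := hgd'
    exact (liftGuard_sat gd₀ μ (embCfg C).g (embCfg C).p).mpr (hgd gd₀ hmem)
  · intro s
    cases s with
    | none => simp [embCfg, liftRule]
    | some s => exact hg s
  · by_cases hsd : r.src = r.dst
    · rw [if_pos (by simp [liftRule, hsd])]
      rw [if_pos hsd] at hκ
      funext o; cases o <;> simp [embCfg, hκ]
    · rw [if_neg (by simp [liftRule, hsd])]
      rw [if_neg hsd] at hκ
      funext o
      cases o with
      | none => simp [embCfg, liftRule, Function.update_apply]
      | some q =>
        show C'.κ q = _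
        rw [hκ]
        simp [liftRule, embCfg, Function.update_apply]

lemma fill_run [Fintype Loc] [DecidableEq Loc] [Fintype EnvVar]
    (TA : Sketch Loc Shared EnvVar Indet) (start ℓ : Loc) (μ : Indet → ℤ)
    (pv : EnvVar → ℕ) (n : ℕ) :
    Relation.ReflTransGen (Step (primeSketch TA start ℓ) μ)
      ⟨fun o => if o = none then n else 0, fun _ => 0, pv⟩
      ⟨fun o => if o = some start then n else 0, fun _ => 0, pv⟩ := by
  set cfg : ℕ → Config (Option Loc) (Option Shared) EnvVar := fun k =>
    ⟨fun o => if o = none then n - k else if o = some start then k else 0,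
     fun _ => 0, pv⟩ with hcfg
  have key : ∀ k, k ≤ n →
      Relation.ReflTransGen (Step (primeSketch TA start ℓ) μ) (cfg 0) (cfg k) := by
    intro k hk
    induction k with
    | zero => exact .refl
    | succ k ih =>
      refine (ih (Nat.le_of_succ_le hk)).tail ?_
      refine ⟨⟨none, some start, [], fun _ => false⟩, Or.inr (Or.inl rfl),
        ?_, by simp, rfl, fun s => by simp [hcfg], ?_⟩
      · show 0 < (cfg k).κ none
        simp only [hcfg]
        simp
        omega
      · rw [if_neg (by simp)]
        funext o
        simp only [hcfg, Function.update_apply]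
        rcases o with _ | q
        · simp; omega
        · by_cases hq : q = start <;> simp [hq]
  have h0 : cfg 0 = ⟨fun o => if o = none then n else 0, fun _ => 0, pv⟩ := by
    simp only [hcfg, Config.mk.injEq]
    refine ⟨funext fun o => ?_, trivial, trivial⟩
    rcases o with _ | q <;> simp
  have hn : cfg n = ⟨fun o => if o = some start then n else 0, fun _ => 0, pv⟩ := by
    simp only [hcfg, Config.mk.injEq]
    refine ⟨funext fun o => ?_, trivial, trivial⟩
    rcases o with _ | q <;> simp
  rw [← h0, ← hn]
  exact key n le_rfl

lemma prime_covers_of_covers [Fintype Loc] [DecidableEq Loc] [Fintype EnvVar]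
    {env : Env EnvVar} {TA : Sketch Loc Shared EnvVar Indet} {start ℓ : Loc}
    {μ : Indet → ℤ} (hinit : TA.initial = {start})
    (h : Covers env TA μ ℓ) :
    Covers env (primeSketch TA start ℓ) μ (some ℓ) := by
  obtain ⟨C, D, ⟨⟨hRC, hsum⟩, hloc, hgz⟩, hrun, hpos⟩ := h
  have hrun' : Relation.ReflTransGen (Step (primeSketch TA start ℓ) μ)
      (embCfg C) (embCfg D) := by
    clear hpos hsum
    induction hrun with
    | refl => exact .refl
    | tail h e ih => exact ih.tail (emb_step e)
  have hks : C.κ start = env.N C.p := by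
    rw [← hsum]
    exact (Finset.sum_eq_single_of_mem start (Finset.mem_univ _)
      (fun b _ hb => hloc b (by rw [hinit]; simpa using hb))).symm
  have hemb : embCfg C =
      ⟨fun o => if o = some start then env.N C.p else 0, fun _ => 0, C.p⟩ := by
    simp only [embCfg, Config.mk.injEq]
    refine ⟨funext fun o => ?_, funext fun s => ?_, trivial⟩
    · rcases o with _ | q
      · simp
      · by_cases hq : q = start
        · simp [hq, hks]
        · simpa [hq] using hloc q (by rw [hinit]; simpa using hq)
    · rcases s with _ | s <;> simp [hgz]
  refine ⟨⟨fun o => if o = none then env.N C.p else 0, fun _ => 0, C.p⟩,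
    embCfg D, ⟨⟨hRC, by simp [Fintype.sum_option]⟩,
      fun q hq => if_neg (by simpa [primeSketch] using hq), fun s => rfl⟩,
    ?_, by simpa [embCfg] using hpos⟩
  exact (fill_run TA start ℓ μ C.p (env.N C.p)).trans (hemb ▸ hrun')

end Aux

/-- **Reduction from non-negative coefficient synthesis to coefficient
synthesis (Theorem 3)**: let `(Env, TA, ℓ)` be an instance of the non-negative
coefficient synthesis problem with `TA` acyclic, finite, with finitely many
indeterminates, with a linear number function and with the single initial
location `start`, and let `TA'` be the sketch described above. Then there is a
non-negative integer assignment `μ` with `TA[μ]` unable to cover `ℓ` iff there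
is an integer assignment `μ` with `TA'[μ]` unable to cover `ℓ`; moreover, `TA'`
is acyclic. -/
theorem prime_sketch_correct {Loc Shared EnvVar Indet : Type}
    [Fintype Loc] [DecidableEq Loc] [Finite Shared] [Fintype EnvVar]
    [Finite Indet]
    (env : Env EnvVar)
    (hN : ∃ (c : ℤ) (coef : EnvVar → ℤ), ∀ pv ∈ env.RC,
      (env.N pv : ℤ) = c + ∑ i, coef i * (pv i : ℤ))
    (TA : Sketch Loc Shared EnvVar Indet) (hfin : TA.rules.Finite)
    (start ℓ : Loc)
    (hacyc : Acyclic TA) (hinit : TA.initial = {start}) :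
    ((∃ μ : Indet → ℤ, (∀ x, 0 ≤ μ x) ∧ ¬ Covers env TA μ ℓ) ↔
      (∃ μ : Indet → ℤ, ¬ Covers env (primeSketch TA start ℓ) μ (some ℓ))) ∧
    Acyclic (primeSketch TA start ℓ) := by
  constructor
  · constructor
    · rintro ⟨μ, hμ, hnc⟩
      exact ⟨μ, fun h => hnc (covers_of_prime hμ hinit h)⟩
    · rintro ⟨μ, hnc⟩
      refine ⟨fun x => max (μ x) 0, fun x => le_max_right _ _, ?_⟩
      intro hcov
      by_cases hall : ∀ x, 0 ≤ μ x
      · have hμeq : (fun x => max (μ x) 0) = μ :=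
          funext fun x => max_eq_left (hall x)
        rw [hμeq] at hcov
        exact hnc (prime_covers_of_covers hinit hcov)
      · push_neg at hall
        obtain ⟨x, hx⟩ := hall
        obtain ⟨C, D, ⟨⟨hRC, hsum⟩, hloc, hgz⟩, hrun, hpos⟩ := hcov
        have hpres : D.p = C.p ∧ ∑ q, D.κ q = ∑ q, C.κ q := by
          clear hpos
          induction hrun with
          | refl => exact ⟨rfl, rfl⟩
          | tail h e ih =>
            obtain ⟨h1, h2⟩ := step_preserves e
            exact ⟨h1.trans ih.1, h2.trans ih.2⟩
        have hNpos : 0 < env.N C.p := by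
          have h1 : D.κ ℓ ≤ ∑ q, D.κ q :=
            Finset.single_le_sum (fun _ _ => Nat.zero_le _) (Finset.mem_univ ℓ)
          omega
        apply hnc
        set κ₀ : Option Loc → ℕ := fun o => if o = none then env.N C.p else 0
          with hκ₀
        refine ⟨⟨κ₀, fun _ => 0, C.p⟩,
          ⟨Function.update (Function.update κ₀ none (κ₀ none - 1)) (some ℓ)
            (κ₀ (some ℓ) + 1), fun _ => 0, C.p⟩,
          ⟨⟨hRC, by simp [hκ₀, Fintype.sum_option]⟩,
            fun q hq => if_neg (by simpa [primeSketch] using hq),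
            fun s => rfl⟩,
          Relation.ReflTransGen.single ?_, ?_⟩
        · refine ⟨⟨none, some ℓ, [checkGuard x], fun _ => false⟩,
            Or.inr (Or.inr ⟨x, rfl⟩), ?_, ?_, rfl, fun s => by simp, ?_⟩
          · show 0 < κ₀ none
            simp [hκ₀, hNpos]
          · intro gd hgd
            simp only [List.mem_singleton] at hgd
            subst hgd
            rw [checkGuard_sat]
            exact lt_of_lt_of_le hx (by simp)
          · exact (if_neg (by simp)).symm
        · simp
  · -- acyclicity
    intro q hq
    set E : Loc → Loc → Prop :=
      fun u w => ∃ r ∈ TA.rules, r.src = u ∧ r.dst = w with hE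
    set E' : Option Loc → Option Loc → Prop :=
      fun u w => ∃ r ∈ (primeSketch TA start ℓ).rules, r.src = u ∧ r.dst = w
      with hE'
    have hdst : ∀ u w, E' u w → ∃ b, w = some b := by
      rintro u w ⟨r, hr, -, rfl⟩
      obtain (⟨r₀, -, rfl⟩ | rfl | ⟨y, rfl⟩) := hr <;> exact ⟨_, rfl⟩
    have hsome : ∀ {v w : Option Loc}, Relation.TransGen E' v w →
        ∀ a, v = some a → ∃ b, w = some b ∧ Relation.TransGen E a b := by
      intro v w h
      induction h with
      | single e =>
        rintro a rfl
        obtain ⟨r, hr, hsrc, rfl⟩ := e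
        obtain (⟨r₀, hr₀, rfl⟩ | rfl | ⟨y, rfl⟩) := hr
        · refine ⟨r₀.dst, rfl, .single ⟨r₀, hr₀, ?_, rfl⟩⟩
          exact Option.some_injective _ hsrc
        · exact absurd hsrc (by simp)
        · exact absurd hsrc (by simp)
      | tail h e ih =>
        rintro a rfl
        obtain ⟨b, rfl, hab⟩ := ih a rfl
        obtain ⟨r, hr, hsrc, rfl⟩ := e
        obtain (⟨r₀, hr₀, rfl⟩ | rfl | ⟨y, rfl⟩) := hr
        · refine ⟨r₀.dst, rfl, hab.tail ⟨r₀, hr₀, ?_, rfl⟩⟩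
          exact Option.some_injective _ hsrc
        · exact absurd hsrc (by simp)
        · exact absurd hsrc (by simp)
    rcases q with _ | a
    · cases hq with
      | single e =>
        obtain ⟨b, hb⟩ := hdst _ _ e
        exact nomatch hb
      | tail h e =>
        obtain ⟨b, hb⟩ := hdst _ _ e
        exact nomatch hb
    · obtain ⟨b, hb, htg⟩ := hsome hq a rfl
      obtain rfl : a = b := Option.some_injective _ hb
      exact hacyc a htg

end ThresholdAutomata
end

section
/- With TA' constructed as described from an acyclic sketch TA with single initial location start: for any non-negative integer assignment μ to the indeterminates, if TA[μ] cannot cover ℓ, then TA'[μ] cannot cover ℓ. -/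
namespace ThresholdAutomata

/-- The projection of a configuration of `TA'` to one of `TA`: processes in
`begin = none` are counted as being in `start`. -/
def projConfig {Loc Shared EnvVar : Type} [DecidableEq Loc] (start : Loc)
    (C : Config (Option Loc) (Option Shared) EnvVar) :
    Config Loc Shared EnvVar where
  κ q := C.κ (some q) + (if q = start then C.κ none else 0)
  g s := C.g (some s)
  p := C.p

lemma step_proj {Loc Shared EnvVar Indet : Type}
    [Fintype Loc] [DecidableEq Loc] [Fintype EnvVar]
    (TA : Sketch Loc Shared EnvVar Indet) (start ℓ : Loc)
    (μ : Indet → ℤ) (hnonneg : ∀ x : Indet, 0 ≤ μ x)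
    {C C' : Config (Option Loc) (Option Shared) EnvVar}
    (hg : C.g none = 0)
    (h : Step (primeSketch TA start ℓ) μ C C') :
    C'.g none = 0 ∧ (Step TA μ (projConfig start C) (projConfig start C') ∨
      projConfig start C' = projConfig start C) := by
  obtain ⟨r, hr, hocc, hgd, hp, hgs, hκ⟩ := h
  rcases hr with ⟨r₀, hr₀, rfl⟩ | rfl | ⟨x, rfl⟩
  · -- lifted rule
    have hgnone : C'.g none = 0 := by
      have := hgs none
      simpa [liftRule, hg] using this
    refine ⟨hgnone, Or.inl ⟨r₀, hr₀, ?_, ?_, hp, ?_, ?_⟩⟩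
    · have : 0 < C.κ (some r₀.src) := hocc
      simp only [projConfig]
      omega
    · intro gd hgd₀
      have := hgd (liftGuard gd) (List.mem_map_of_mem (f := liftGuard) hgd₀)
      exact this
    · intro s
      have := hgs (some s)
      exact this
    · by_cases hsd : r₀.src = r₀.dst
      · have : (liftRule r₀).src = (liftRule r₀).dst := by simp [liftRule, hsd]
        rw [if_pos hsd]
        rw [if_pos this] at hκ
        funext q
        simp [projConfig, hκ]
      · have hsd' : ¬ ((liftRule r₀).src = (liftRule r₀).dst) := by
          simp [liftRule, hsd]
        rw [if_neg hsd]
        rw [if_neg hsd'] at hκ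
        funext q
        have hκ' : ∀ z, C'.κ z =
            Function.update (Function.update C.κ (some r₀.src)
              (C.κ (some r₀.src) - 1)) (some r₀.dst) (C.κ (some r₀.dst) + 1) z :=
          fun z => by rw [hκ]; rfl
        have hq := hκ' (some q)
        have hn := hκ' none
        have hocc' : 0 < C.κ (some r₀.src) := hocc
        simp only [Function.update, liftRule] at hq hn ⊢
        simp only [projConfig]
        by_cases h1 : q = r₀.dst <;> by_cases h2 : q = r₀.src <;>
          by_cases h3 : q = start <;>
          simp_all <;> omega
  · -- begin → start rule
    have hgnone : C'.g none = 0 := by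
      have := hgs none
      simpa [hg] using this
    refine ⟨hgnone, Or.inr ?_⟩
    have hne : ¬ ((none : Option Loc) = some start) := by simp
    rw [if_neg hne] at hκ
    have hκ' : ∀ z, C'.κ z =
        Function.update (Function.update C.κ none (C.κ none - 1))
          (some start) (C.κ (some start) + 1) z :=
      fun z => by rw [hκ]
    have hocc' : 0 < C.κ (none : Option Loc) := hocc
    have hgs' : ∀ s, C'.g s = C.g s := by
      intro s; have := hgs s; simpa using this
    cases C' with
    | mk κ' g' p' =>
      cases C with
      | mk κ g p =>
        simp only [projConfig, Config.mk.injEq]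
        refine ⟨funext fun q => ?_, funext fun s => hgs' (some s), hp⟩
        have hq := hκ' (some q)
        have hn := hκ' none
        simp only [Function.update] at hq hn
        by_cases h3 : q = start <;> simp_all <;> omega
  · -- check rule: impossible
    exfalso
    have := hgd (checkGuard x) (by simp)
    simp only [Guard.sat, checkGuard, Coeff.eval, CmpOp.holds, hg] at this
    have hx := hnonneg x
    simp at this
    omega

/-- **Non-negative assignments transfer non-coverage to `TA'`**: with `TA'`
constructed as described from an acyclic sketch `TA` with single initial
location `start`, for any non-negative integer assignment `μ` to the
indeterminates, if `TA[μ]` cannot cover `ℓ`, then `TA'[μ]` cannot cover `ℓ`. -/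
theorem prime_sketch_nonneg_transfer {Loc Shared EnvVar Indet : Type}
    [Fintype Loc] [DecidableEq Loc] [Finite Shared] [Fintype EnvVar]
    [Finite Indet]
    (env : Env EnvVar)
    (TA : Sketch Loc Shared EnvVar Indet) (hfin : TA.rules.Finite)
    (start ℓ : Loc)
    (hacyc : Acyclic TA) (hinit : TA.initial = {start})
    (μ : Indet → ℤ) (hnonneg : ∀ x : Indet, 0 ≤ μ x)
    (hnc : ¬ Covers env TA μ ℓ) :
    ¬ Covers env (primeSketch TA start ℓ) μ (some ℓ) := by
  rintro ⟨C, C', hinit', hreach, hℓ⟩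
  -- invariant along the run
  have key : ∀ D, Relation.ReflTransGen (Step (primeSketch TA start ℓ) μ) C D →
      D.g none = 0 ∧
        Relation.ReflTransGen (Step TA μ) (projConfig start C) (projConfig start D) := by
    intro D hD
    induction hD with
    | refl => exact ⟨hinit'.2.2 none, Relation.ReflTransGen.refl⟩
    | tail hab hbc ih =>
      obtain ⟨hg0, hstep⟩ := step_proj TA start ℓ μ hnonneg ih.1 hbc
      refine ⟨hg0, ?_⟩
      rcases hstep with hstep | heq
      · exact ih.2.tail hstep
      · rw [heq]; exact ih.2
  obtain ⟨_, hreach'⟩ := key C' hreach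
  apply hnc
  refine ⟨projConfig start C, projConfig start C', ?_, hreach', ?_⟩
  · obtain ⟨⟨hRC, hN⟩, hloc, hg⟩ := hinit'
    refine ⟨⟨hRC, ?_⟩, ?_, fun s => hg (some s)⟩
    · have : (∑ q : Loc, (projConfig start C).κ q) = ∑ q : Option Loc, C.κ q := by
        simp only [projConfig]
        rw [Finset.sum_add_distrib, Fintype.sum_option]
        simp [Finset.sum_ite_eq']
        omega
      rw [this]
      exact hN
    · intro q hq
      rw [hinit] at hq
      have hq' : q ≠ start := hq
      have h1 : C.κ (some q) = 0 := by
        apply hloc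
        simp [primeSketch]
      simp [projConfig, hq']
      exact h1
  · have : 0 < C'.κ (some ℓ) := hℓ
    simp only [projConfig]
    omega

end ThresholdAutomata
end
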